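/- arXiv:1404.4415 — 2 statements merged into one kernel-verified Lean document; each statement's English description precedes it below -/
import Mathlib

section
/- Let λ, μ ∈ 𝒫^l_n, let 0 ≤ j ≤ n and let t, u ∈ Std(μ) with u ⊴ t (that is, w_u ≤ w_t in the Bruhat order). If t is weakly λ-column-dominated on 1,…,j, then so is u. -/
namespace FS

open scoped Classical

/-- A node `(r, c, m)`: row `r`, column `c`, component `m` (all 1-based). -/
abbrev Node := ℕ × ℕ × ℕ

/-- Membership of a node in the Young diagram of the multipartition `p`,
where `p m r` is the `r`-th part of the `m`-th component. -/
def InDiag (p : ℕ → ℕ → ℕ) (A : Node) : Prop :=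
  1 ≤ A.2.1 ∧ A.2.1 ≤ p A.2.2 A.1

/-- `p` is an `l`-multipartition of `n` (components indexed `1,…,l`, rows indexed `1,…`). -/
def IsMP (l n : ℕ) (p : ℕ → ℕ → ℕ) : Prop :=
  (∀ m r, (m = 0 ∨ l < m ∨ r = 0 ∨ n < r) → p m r = 0) ∧
  (∀ m r, 1 ≤ r → p m (r + 1) ≤ p m r) ∧
  (∑ m ∈ Finset.Icc 1 l, ∑ r ∈ Finset.Icc 1 n, p m r) = n

/-- Total size of an `l`-multicomposition (rows bounded by `n`). -/
def mpSize (l n : ℕ) (p : ℕ → ℕ → ℕ) : ℕ :=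
  ∑ m ∈ Finset.Icc 1 l, ∑ r ∈ Finset.Icc 1 n, p m r

/-- Size of the `m`-th component. -/
def compSize (n : ℕ) (p : ℕ → ℕ → ℕ) (m : ℕ) : ℕ :=
  ∑ r ∈ Finset.Icc 1 n, p m r

/-- Length of column `c` of component `m`, i.e. `(p^(m))'_c`. -/
def colLen (n : ℕ) (p : ℕ → ℕ → ℕ) (m c : ℕ) : ℕ :=
  ((Finset.Icc 1 n).filter fun r => c ≤ p m r).card

/-- Dominance order on `l`-multicompositions: `Dom l N p q` means `p ⊵ q`. -/
def Dom (l N : ℕ) (p q : ℕ → ℕ → ℕ) : Prop :=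
  ∀ m r, 1 ≤ m → m ≤ l →
    (∑ m' ∈ Finset.Icc 1 (m - 1), compSize N q m') + ∑ r' ∈ Finset.Icc 1 r, q m r' ≤
      (∑ m' ∈ Finset.Icc 1 (m - 1), compSize N p m') + ∑ r' ∈ Finset.Icc 1 r, p m r'

/-- `t` is a `p`-tableau: a bijection from the diagram of `p` onto `{1,…,n}`. -/
def IsTab (n : ℕ) (p : ℕ → ℕ → ℕ) (t : Node → ℕ) : Prop :=
  (∀ A, InDiag p A → 1 ≤ t A ∧ t A ≤ n) ∧
  (∀ A B, InDiag p A → InDiag p B → t A = t B → A = B) ∧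
  (∀ i, 1 ≤ i → i ≤ n → ∃ A, InDiag p A ∧ t A = i)

/-- Entries increase from left to right along each row. -/
def RowStrict (p : ℕ → ℕ → ℕ) (t : Node → ℕ) : Prop :=
  ∀ r c m, InDiag p (r, c, m) → InDiag p (r, c + 1, m) → t (r, c, m) < t (r, c + 1, m)

/-- Entries increase down each column. -/
def ColStrict (p : ℕ → ℕ → ℕ) (t : Node → ℕ) : Prop :=
  ∀ r c m, InDiag p (r, c, m) → InDiag p (r + 1, c, m) → t (r, c, m) < t (r + 1, c, m)

/-- A standard tableau is both row-strict and column-strict. -/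
def IsStd (p : ℕ → ℕ → ℕ) (t : Node → ℕ) : Prop := RowStrict p t ∧ ColStrict p t

/-- The tableau `t_λ`, obtained by writing `1,…,n` in order down successive columns
from left to right (components from `l` down to `1`). -/
def colTab (l n : ℕ) (p : ℕ → ℕ → ℕ) : Node → ℕ := fun A =>
  (∑ m' ∈ Finset.Icc (A.2.2 + 1) l, compSize n p m') +
    (∑ c' ∈ Finset.Icc 1 (A.2.1 - 1), colLen n p A.2.2 c') + A.1

/-- The tableau `t^λ`, obtained by writing `1,…,n` in order along successive rows
from top to bottom (components from `1` up to `l`). -/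
def rowTab (n : ℕ) (p : ℕ → ℕ → ℕ) : Node → ℕ := fun A =>
  (∑ m' ∈ Finset.Icc 1 (A.2.2 - 1), compSize n p m') +
    (∑ r' ∈ Finset.Icc 1 (A.1 - 1), p A.2.2 r') + A.2.1

/-- The Coxeter generator `s_i = (i, i+1)` of the symmetric group. -/
def sw (i : ℕ) : Equiv.Perm ℕ := Equiv.swap i (i + 1)

/-- The product `s_{i_1} ⋯ s_{i_k}` corresponding to a word `L = [i_1,…,i_k]`. -/
def wordProd (L : List ℕ) : Equiv.Perm ℕ := (L.map sw).prod

/-- `L` is an expression for `w` in the Coxeter generators `s_1,…,s_{n-1}` of `S_n`. -/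
def IsWord (n : ℕ) (L : List ℕ) (w : Equiv.Perm ℕ) : Prop :=
  (∀ i ∈ L, 1 ≤ i ∧ i + 1 ≤ n) ∧ wordProd L = w

/-- The Coxeter length of `w ∈ S_n`. -/
noncomputable def len (n : ℕ) (w : Equiv.Perm ℕ) : ℕ :=
  sInf {k | ∃ L, IsWord n L w ∧ L.length = k}

/-- `L` is a reduced expression for `w ∈ S_n`. -/
def IsReduced (n : ℕ) (L : List ℕ) (w : Equiv.Perm ℕ) : Prop :=
  IsWord n L w ∧ L.length = len n w

/-- The Bruhat order on `S_n`: `x ≤ w` iff some reduced expression for `w` has an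
expression for `x` as a subsequence. -/
def BruhatLE (n : ℕ) (x w : Equiv.Perm ℕ) : Prop :=
  ∃ L, IsReduced n L w ∧ ∃ L', L'.Sublist L ∧ wordProd L' = x

/-- Strict Bruhat order. -/
def BruhatLT (n : ℕ) (x w : Equiv.Perm ℕ) : Prop := BruhatLE n x w ∧ x ≠ w

/-- The left (weak) order on `S_n`: `x ≤_L w` iff `ℓ(w) = ℓ(w x⁻¹) + ℓ(x)`. -/
def LeftLE (n : ℕ) (x w : Equiv.Perm ℕ) : Prop :=
  len n w = len n (w * x⁻¹) + len n x

/-- `w` is a permutation of `{1,…,n}` (fixing everything else). -/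
def PermOf (n : ℕ) (w : Equiv.Perm ℕ) : Prop := ∀ i, i = 0 ∨ n < i → w i = i

/-- `w` is the permutation sending the base tableau `base` to the tableau `t`
(e.g. `w = w_t` when `base = t_λ`). -/
def IsPermOfTab (n : ℕ) (p : ℕ → ℕ → ℕ) (base t : Node → ℕ) (w : Equiv.Perm ℕ) : Prop :=
  PermOf n w ∧ ∀ A, InDiag p A → w (base A) = t A

/-- `Shape(t↓j)`: the multicomposition whose `(m, r)` entry is the number of nodes in
row `r` of component `m` whose entry under `t` is at most `j`. -/
def shape (n : ℕ) (p : ℕ → ℕ → ℕ) (t : Node → ℕ) (j : ℕ) : ℕ → ℕ → ℕ :=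
  fun m r => ((Finset.Icc 1 n).filter fun c => c ≤ p m r ∧ t (r, c, m) ≤ j).card

/-- `Shape(t↓j)'`: the conjugate multicomposition, whose `(m, c)` entry is the number of
nodes in column `c` of component `l + 1 - m` whose entry under `t` is at most `j`. -/
def shapeConj (l n : ℕ) (p : ℕ → ℕ → ℕ) (t : Node → ℕ) (j : ℕ) : ℕ → ℕ → ℕ :=
  fun m c => ((Finset.Icc 1 n).filter fun r => c ≤ p (l + 1 - m) r ∧ t (r, c, l + 1 - m) ≤ j).card

/-- `A` lies weakly to the left of `B`. -/
def WeaklyLeft (A B : Node) : Prop :=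
  B.2.2 < A.2.2 ∨ (A.2.2 = B.2.2 ∧ A.2.1 ≤ B.2.1)

/-- `A` lies weakly above `B`. -/
def WeaklyAbove (A B : Node) : Prop :=
  A.2.2 < B.2.2 ∨ (A.2.2 = B.2.2 ∧ A.1 ≤ B.1)

/-- `A` lies weakly to the right of `B`. -/
def WeaklyRight (A B : Node) : Prop :=
  A.2.2 < B.2.2 ∨ (A.2.2 = B.2.2 ∧ B.2.1 ≤ A.2.1)

/-- `t` (a `mu`-tableau) is `lam`-column-dominated on `1,…,j`: each `i ≤ j` appears in `t`
at least as far to the left as it does in `t_lam`. -/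
def ColDomOn (l n : ℕ) (lam mu : ℕ → ℕ → ℕ) (t : Node → ℕ) (j : ℕ) : Prop :=
  ∀ i A B, 1 ≤ i → i ≤ j → InDiag mu A → t A = i → InDiag lam B →
    colTab l n lam B = i → WeaklyLeft A B

/-- `t` is weakly `lam`-column-dominated on `1,…,j`: each `i ≤ j` appears in `t` in a
component at least as far to the left as it does in `t_lam`. -/
def WColDomOn (l n : ℕ) (lam mu : ℕ → ℕ → ℕ) (t : Node → ℕ) (j : ℕ) : Prop :=
  ∀ i A B, 1 ≤ i → i ≤ j → InDiag mu A → t A = i → InDiag lam B →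
    colTab l n lam B = i → B.2.2 ≤ A.2.2

/-- `t` (a `mu`-tableau) is `lam`-row-dominated on `1,…,j`: each `i ≤ j` appears in `t`
at least as high as it does in `t^lam`. -/
def RowDomOn (n : ℕ) (lam mu : ℕ → ℕ → ℕ) (t : Node → ℕ) (j : ℕ) : Prop :=
  ∀ i A B, 1 ≤ i → i ≤ j → InDiag mu A → t A = i → InDiag lam B →
    rowTab n lam B = i → WeaklyAbove A B

/-- The multipartition `λ_L(c, m)`: the first `c` columns of component `m`, followed by
components `m+1,…,l`. -/
def leftPart (lam : ℕ → ℕ → ℕ) (c m : ℕ) : ℕ → ℕ → ℕ := fun k r =>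
  if k = 0 then 0 else if k = 1 then min (lam m r) c else lam (m + k - 1) r

/-- The multipartition `λ_R(c, m)`: components `1,…,m-1`, followed by the part of
component `m` after its first `c` columns. -/
def rightPart (lam : ℕ → ℕ → ℕ) (c m : ℕ) : ℕ → ℕ → ℕ := fun k r =>
  if k < m then lam k r else if k = m then lam m r - c else 0

/-- The multipartition `λ_T(r₀, m)`: components `1,…,m-1`, followed by the first `r₀`
rows of component `m`. -/
def topPart (lam : ℕ → ℕ → ℕ) (r₀ m : ℕ) : ℕ → ℕ → ℕ := fun k r =>
  if k < m then lam k r else if k = m then (if r ≤ r₀ then lam m r else 0) else 0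

/-- The multipartition `λ_B(r₀, m)`: the rows of component `m` after row `r₀`, followed
by components `m+1,…,l`. -/
def botPart (lam : ℕ → ℕ → ℕ) (r₀ m : ℕ) : ℕ → ℕ → ℕ := fun k r =>
  if k = 0 ∨ r = 0 then 0 else if k = 1 then lam m (r₀ + r) else lam (m + k - 1) r

/-- The glued tableau `t_L # t_R`: places `1,…,n_L` on the left part as in `t_L`, and
places `n_L + t_R(A)` at the node corresponding to each node `A` of the right part. -/
def glueLR (nL c m : ℕ) (tL tR : Node → ℕ) : Node → ℕ := fun A =>
  if A.2.2 < m then nL + tR A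
  else if A.2.2 = m then
    (if A.2.1 ≤ c then tL (A.1, A.2.1, 1) else nL + tR (A.1, A.2.1 - c, m))
  else tL (A.1, A.2.1, A.2.2 - m + 1)

/-- The tableau `t⁺` obtained from a tableau `t` of `μ_R(1,m)` by increasing all entries
by `k`, adjoining a first column with entries `1,…,k` to component `m`, and adjoining
empty components `m+1,…,l`. -/
def addFirstCol (k m : ℕ) (t : Node → ℕ) : Node → ℕ := fun A =>
  if A.2.2 = m then (if A.2.1 = 1 then A.1 else k + t (A.1, A.2.1 - 1, m))
  else k + t A

/-- The tableau `t⁺` obtained from a tableau `t` of `μ_L(d-1,m)` by adjoining empty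
components `1,…,m-1` and adjoining a column `d` to component `m` with entries
`nk+1,…,nk+k` from top to bottom. -/
def addLastCol (nk m d : ℕ) (t : Node → ℕ) : Node → ℕ := fun A =>
  if A.2.2 = m then (if A.2.1 = d then nk + A.1 else t (A.1, A.2.1, 1))
  else t (A.1, A.2.1, A.2.2 - m + 1)

/-- The `i`-th smallest element of a finite set of naturals (1-based). -/
def nthElt (S : Finset ℕ) (i : ℕ) : ℕ := (S.sort (· ≤ ·)).getD (i - 1) 0

/-- The set `S_B` of entries of `t_λ` lying in the bottom region (component `> m`, or
component `m` in a row `> r₀`). -/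
noncomputable def SB (l n : ℕ) (lam : ℕ → ℕ → ℕ) (r₀ m : ℕ) : Finset ℕ :=
  (Finset.Icc 1 n).filter fun i =>
    ∃ A, InDiag lam A ∧ colTab l n lam A = i ∧ (m < A.2.2 ∨ (A.2.2 = m ∧ r₀ < A.1))

/-- The glued tableau `t #̄ s`: on the bottom region the entries are `lab_B ∘ t` and on
the top region they are `lab_T ∘ s`, where `lab_B`, `lab_T` are the order-preserving
bijections onto `S_B`, `S_T`. -/
def glueBT (S_B S_T : Finset ℕ) (r₀ m : ℕ) (tB tT : Node → ℕ) : Node → ℕ := fun A =>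
  if A.2.2 < m then nthElt S_T (tT A)
  else if A.2.2 = m then
    (if A.1 ≤ r₀ then nthElt S_T (tT A) else nthElt S_B (tB (A.1 - r₀, A.2.1, 1)))
  else nthElt S_B (tB (A.1, A.2.1, A.2.2 - m + 1))

/-- The residue of a node `(r, c, m)` with respect to the multicharge `κ`:
`κ_m + c - r` in `ℤ/eℤ` (with `ZMod 0 = ℤ` encoding `e = ∞`). -/
def resNode (e : ℕ) (κ : ℕ → ZMod e) (A : Node) : ZMod e :=
  κ A.2.2 + (A.2.1 : ZMod e) - (A.1 : ZMod e)

/-!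
An entry `x` of a `μ`-tableau `t` lies in component `≥ m` exactly when
`w_t⁻¹ x ≤ N_m := |μ^(m)| + ⋯ + |μ^(l)|`, and the component of `x` in `t_λ` decreases as `x`
grows. So weak column dominance on `1, …, j` says that for every `i ≤ j`, `w_t⁻¹` maps
`{1, …, i}` into `{1, …, N_m}`, `m` the component of `i` in `t_λ`; in terms of the rank function
`r_w(b, a) = #{y ≤ b : w y ≤ a}` this is `r_{w_t}(N_m, i) ≥ i`. It therefore suffices that
`u ≤ w` in the Bruhat order implies `r_w ≤ r_u` pointwise. Along a reduced word every letter
`s_p` is appended at an ascent, and `r_{v s_p}` differs from `r_v` only at `b = p`; comparing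
there shows that both dropping and keeping the letter preserve the inequality.
-/

section Bruhat

open Finset

variable {n : ℕ}

lemma wordProd_concat (L : List ℕ) (p : ℕ) : wordProd (L ++ [p]) = wordProd L * sw p := by
  simp [wordProd]

lemma mul_sw_mul_sw (w : Equiv.Perm ℕ) (p : ℕ) : w * sw p * sw p = w := by
  rw [mul_assoc, sw, Equiv.swap_mul_self, mul_one]

lemma PermOf.mul {u v : Equiv.Perm ℕ} (hu : PermOf n u) (hv : PermOf n v) :
    PermOf n (u * v) := by
  intro i hi
  rw [Equiv.Perm.mul_apply, hv i hi, hu i hi]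

lemma permOf_sw {p : ℕ} (hp : 1 ≤ p) (hpn : p + 1 ≤ n) : PermOf n (sw p) :=
  fun _ _ => Equiv.swap_apply_of_ne_of_ne (by omega) (by omega)

lemma permOf_wordProd {L : List ℕ} (hL : ∀ p ∈ L, 1 ≤ p ∧ p + 1 ≤ n) :
    PermOf n (wordProd L) := by
  induction L using List.reverseRecOn with
  | nil => exact fun _ _ => rfl
  | append_singleton M p ih =>
    rw [wordProd_concat]
    have hp := hL p (by simp)
    exact (ih fun q hq => hL q (by simp [hq])).mul (permOf_sw hp.1 hp.2)

lemma PermOf.apply_mem_Icc {w : Equiv.Perm ℕ} (hw : PermOf n w) {x : ℕ} (hx : x ∈ Icc 1 n) :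
    w x ∈ Icc 1 n := by
  rw [mem_Icc] at hx ⊢
  by_contra h
  have := w.injective (hw (w x) (by omega))
  omega

lemma PermOf.eq_one_of_forall_lt {w : Equiv.Perm ℕ} (hw : PermOf n w)
    (h : ∀ p, 1 ≤ p → p + 1 ≤ n → w p < w (p + 1)) : w = 1 := by
  have hgrow : ∀ d x, 1 ≤ x → x + d ≤ n → w x + d ≤ w (x + d) := by
    intro d
    induction d with
    | zero => simp
    | succ d ih =>
      intro x hx hxd
      have := h (x + d) (by omega) (by omega)
      have := ih x hx (by omega)
      rw [show x + (d + 1) = x + d + 1 by omega]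
      omega
  ext x
  by_cases hx : x = 0 ∨ n < x
  · exact hw x hx
  have h1 := mem_Icc.1 (hw.apply_mem_Icc (x := 1) (mem_Icc.2 ⟨le_rfl, by omega⟩))
  have hn := mem_Icc.1 (hw.apply_mem_Icc (x := n) (mem_Icc.2 ⟨by omega, le_rfl⟩))
  have hlow := hgrow (x - 1) 1 le_rfl (by omega)
  have hhigh := hgrow (n - x) x (by omega) (by omega)
  rw [show 1 + (x - 1) = x by omega] at hlow
  rw [show x + (n - x) = n by omega] at hhigh
  simp only [Equiv.Perm.one_apply]
  omega

def invSet (n : ℕ) (w : Equiv.Perm ℕ) : Finset (ℕ × ℕ) :=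
  (Icc 1 n ×ˢ Icc 1 n).filter fun q => q.1 < q.2 ∧ w q.2 < w q.1

def invNum (n : ℕ) (w : Equiv.Perm ℕ) : ℕ := (invSet n w).card

lemma invSet_mul_sw {w : Equiv.Perm ℕ} {p : ℕ} (hp : 1 ≤ p) (hpn : p + 1 ≤ n)
    (h : w p < w (p + 1)) :
    invSet n (w * sw p) =
      insert (p, p + 1) ((invSet n w).map (Equiv.prodCongr (sw p) (sw p)).toEmbedding) := by
  ext ⟨a, b⟩
  simp only [invSet, mem_insert, mem_map_equiv, mem_filter]
  simp only [mem_product, mem_Icc, Prod.mk.injEq, Equiv.prodCongr_symm, Equiv.prodCongr_apply,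
    Prod.map, Equiv.Perm.mul_apply, sw, Equiv.symm_swap, Equiv.swap_apply_def]
  split_ifs <;> subst_vars <;> omega

lemma invNum_mul_sw_of_lt {w : Equiv.Perm ℕ} {p : ℕ} (hp : 1 ≤ p) (hpn : p + 1 ≤ n)
    (h : w p < w (p + 1)) : invNum n (w * sw p) = invNum n w + 1 := by
  rw [invNum, invSet_mul_sw hp hpn h, card_insert_of_notMem, card_map, invNum]
  simp [mem_map_equiv, invSet, sw]

lemma invNum_mul_sw_of_gt {w : Equiv.Perm ℕ} {p : ℕ} (hp : 1 ≤ p) (hpn : p + 1 ≤ n)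
    (h : w (p + 1) < w p) : invNum n (w * sw p) + 1 = invNum n w := by
  have := invNum_mul_sw_of_lt hp hpn (w := w * sw p) (by simpa [sw] using h)
  rwa [mul_sw_mul_sw, eq_comm] at this

lemma invNum_mul_sw_le (w : Equiv.Perm ℕ) {p : ℕ} (hp : 1 ≤ p) (hpn : p + 1 ≤ n) :
    invNum n (w * sw p) ≤ invNum n w + 1 := by
  rcases lt_trichotomy (w p) (w (p + 1)) with h | h | h
  · exact (invNum_mul_sw_of_lt hp hpn h).le
  · exact absurd (w.injective h) (by omega)
  · have := invNum_mul_sw_of_gt hp hpn h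
    omega

lemma lt_of_invNum_lt_invNum_mul_sw {w : Equiv.Perm ℕ} {p : ℕ} (hp : 1 ≤ p) (hpn : p + 1 ≤ n)
    (h : invNum n w < invNum n (w * sw p)) : w p < w (p + 1) := by
  rcases lt_trichotomy (w p) (w (p + 1)) with h' | h' | h'
  · exact h'
  · exact absurd (w.injective h') (by omega)
  · have := invNum_mul_sw_of_gt hp hpn h'
    omega

lemma invNum_wordProd_le {L : List ℕ} (hL : ∀ p ∈ L, 1 ≤ p ∧ p + 1 ≤ n) :
    invNum n (wordProd L) ≤ L.length := by
  induction L using List.reverseRecOn with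
  | nil =>
    refine (card_eq_zero.2 (filter_eq_empty_iff.2 fun q _ h => ?_)).le
    simp only [wordProd, List.map_nil, List.prod_nil, Equiv.Perm.one_apply] at h
    omega
  | append_singleton M p ih =>
    have hp := hL p (by simp)
    have := ih fun q hq => hL q (by simp [hq])
    have := invNum_mul_sw_le (wordProd M) hp.1 hp.2
    rw [wordProd_concat, List.length_append, List.length_singleton]
    omega

lemma exists_isWord_length_le {w : Equiv.Perm ℕ} (hw : PermOf n w) :
    ∃ L, IsWord n L w ∧ L.length ≤ invNum n w := by
  induction hk : invNum n w using Nat.strong_induction_on generalizing w with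
  | _ k ih =>
    by_cases hdesc : ∃ p, 1 ≤ p ∧ p + 1 ≤ n ∧ w (p + 1) < w p
    · obtain ⟨p, hp, hpn, hlt⟩ := hdesc
      have hdrop := invNum_mul_sw_of_gt hp hpn hlt
      obtain ⟨L, ⟨hL, hprod⟩, hlen⟩ :=
        ih _ (by omega) (hw.mul (permOf_sw hp hpn)) rfl
      refine ⟨L ++ [p], ⟨?_, ?_⟩, ?_⟩
      · simp only [List.mem_append, List.mem_singleton]
        rintro q (hq | rfl)
        exacts [hL q hq, ⟨hp, hpn⟩]
      · rw [wordProd_concat, hprod, mul_sw_mul_sw]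
      · simp only [List.length_append, List.length_singleton]
        omega
    · push Not at hdesc
      refine ⟨[], ⟨by simp, ?_⟩, by simp⟩
      rw [hw.eq_one_of_forall_lt fun p hp hpn => ?_]
      · rfl
      · exact lt_of_le_of_ne (hdesc p hp hpn) fun h => by have := w.injective h; omega

lemma IsReduced.invNum_eq {L : List ℕ} {w : Equiv.Perm ℕ} (h : IsReduced n L w) :
    invNum n w = L.length := by
  obtain ⟨⟨hL, rfl⟩, hlen⟩ := h
  obtain ⟨L₀, hL₀, hlen₀⟩ := exists_isWord_length_le (permOf_wordProd hL)
  have : len n (wordProd L) ≤ L₀.length := Nat.sInf_le ⟨L₀, hL₀, rfl⟩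
  have := invNum_wordProd_le hL
  omega

end Bruhat

section Rank

open Finset

variable {n : ℕ}

/-- Fulton's rank function `r_w(b, a)`. -/
def rankFn (w : Equiv.Perm ℕ) (b a : ℕ) : ℕ := ((Icc 1 b).filter fun y => w y ≤ a).card

lemma rankFn_succ (w : Equiv.Perm ℕ) (b a : ℕ) :
    rankFn w (b + 1) a = rankFn w b a + if w (b + 1) ≤ a then 1 else 0 := by
  simp only [rankFn, card_filter]
  exact sum_Icc_succ_top (by omega) _

lemma rankFn_mul_sw_of_ne (w : Equiv.Perm ℕ) {p b : ℕ} (hp : 1 ≤ p) (hb : b ≠ p) (a : ℕ) :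
    rankFn (w * sw p) b a = rankFn w b a := by
  refine card_nbij' (sw p) (sw p) ?_ ?_ ?_ ?_ <;> intro y hy <;>
    simp only [mem_coe, mem_filter] at hy ⊢ <;>
    simp only [mem_Icc, Equiv.Perm.mul_apply, sw, Equiv.swap_apply_def] at hy ⊢ <;>
    split_ifs at hy ⊢ <;> subst_vars <;> omega

lemma rankFn_mul_sw_self (w : Equiv.Perm ℕ) (p a : ℕ) :
    rankFn (w * sw (p + 1)) (p + 1) a = rankFn w p a + if w (p + 1 + 1) ≤ a then 1 else 0 := by
  rw [rankFn_succ, rankFn_mul_sw_of_ne w (by omega) (by omega)]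
  simp [sw]

lemma rankFn_mul_sw_le {w : Equiv.Perm ℕ} {p : ℕ} (hp : 1 ≤ p) (h : w p < w (p + 1))
    (b a : ℕ) : rankFn (w * sw p) b a ≤ rankFn w b a := by
  rcases eq_or_ne b p with rfl | hb
  · obtain ⟨q, rfl⟩ : ∃ q, b = q + 1 := ⟨b - 1, by omega⟩
    rw [rankFn_mul_sw_self, rankFn_succ]
    split_ifs <;> omega
  · exact (rankFn_mul_sw_of_ne w hp hb a).le

lemma rankFn_mul_sw_le_mul_sw {u v : Equiv.Perm ℕ} {p : ℕ} (hp : 1 ≤ p) (h : v p < v (p + 1))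
    (huv : ∀ b a, rankFn v b a ≤ rankFn u b a) (b a : ℕ) :
    rankFn (v * sw p) b a ≤ rankFn (u * sw p) b a := by
  rcases eq_or_ne b p with rfl | hb
  · -- at an ascent `v (q + 1) ≤ a` follows from `v (q + 2) ≤ a`, so the comparison at
    -- `q + 2` supplies the slack needed at `q + 1`
    obtain ⟨q, rfl⟩ : ∃ q, b = q + 1 := ⟨b - 1, by omega⟩
    have h₀ := huv q a
    have h₁ := huv (q + 1) a
    have h₂ := huv (q + 2) a
    rw [rankFn_succ v, rankFn_succ u] at h₁
    rw [rankFn_succ v, rankFn_succ v, rankFn_succ u, rankFn_succ u] at h₂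
    rw [rankFn_mul_sw_self, rankFn_mul_sw_self]
    split_ifs at * <;> omega
  · rw [rankFn_mul_sw_of_ne v hp hb, rankFn_mul_sw_of_ne u hp hb]
    exact huv b a

lemma rankFn_le_of_sublist {L : List ℕ} (hL : ∀ p ∈ L, 1 ≤ p ∧ p + 1 ≤ n)
    (hred : invNum n (wordProd L) = L.length) {L' : List ℕ} (hsub : L'.Sublist L) (b a : ℕ) :
    rankFn (wordProd L) b a ≤ rankFn (wordProd L') b a := by
  induction L using List.reverseRecOn generalizing L' b a with
  | nil => rw [List.sublist_nil.1 hsub]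
  | append_singleton M p ih =>
    have hp := hL p (by simp)
    have hM : ∀ q ∈ M, 1 ≤ q ∧ q + 1 ≤ n := fun q hq => hL q (by simp [hq])
    rw [wordProd_concat, List.length_append, List.length_singleton] at hred
    rw [wordProd_concat]
    have hle := invNum_wordProd_le hM
    have hstep := invNum_mul_sw_le (wordProd M) hp.1 hp.2
    have hasc := lt_of_invNum_lt_invNum_mul_sw (w := wordProd M) hp.1 hp.2 (by omega)
    have hMred : invNum n (wordProd M) = M.length := by omega
    obtain ⟨L₁, L₂, rfl, h₁, h₂⟩ := List.sublist_append_iff.1 hsub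
    rcases List.sublist_singleton.1 h₂ with rfl | rfl
    · rw [List.append_nil]
      exact (rankFn_mul_sw_le hp.1 hasc b a).trans (ih hM hMred h₁ b a)
    · rw [wordProd_concat]
      exact rankFn_mul_sw_le_mul_sw hp.1 hasc (ih hM hMred h₁) b a

lemma rankFn_le_of_bruhatLE {u w : Equiv.Perm ℕ} (h : BruhatLE n u w) (b a : ℕ) :
    rankFn w b a ≤ rankFn u b a := by
  obtain ⟨L, hred, L', hsub, rfl⟩ := h
  have hinv := hred.invNum_eq
  obtain ⟨⟨hL, rfl⟩, -⟩ := hred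
  exact rankFn_le_of_sublist hL hinv hsub b a

lemma le_rankFn_iff {w : Equiv.Perm ℕ} (h0 : w 0 = 0) {b a : ℕ} :
    a ≤ rankFn w b a ↔ ∀ x, 1 ≤ x → x ≤ a → w.symm x ≤ b := by
  set F := (Icc 1 b).filter fun y => w y ≤ a
  have hrank : rankFn w b a = F.card := rfl
  have hpos : ∀ x, 1 ≤ x → 1 ≤ w.symm x := fun x hx => Nat.one_le_iff_ne_zero.2 fun h => by
    have := congrArg w h
    rw [Equiv.apply_symm_apply, h0] at this
    omega
  have himage : F.image w ⊆ Icc 1 a := by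
    intro x hx
    obtain ⟨y, hy, rfl⟩ := mem_image.1 hx
    simp only [F, mem_filter, mem_Icc] at hy ⊢
    refine ⟨Nat.one_le_iff_ne_zero.2 fun h => ?_, hy.2⟩
    have := w.injective (h.trans h0.symm)
    omega
  have hcard : (F.image w).card = F.card := card_image_of_injective F w.injective
  rw [hrank]
  constructor
  · intro h x hx1 hxa
    have heq := eq_of_subset_of_card_le himage (by simpa [hcard] using h)
    obtain ⟨y, hy, rfl⟩ := mem_image.1 (heq ▸ mem_Icc.2 ⟨hx1, hxa⟩ : x ∈ F.image w)
    simp only [F, mem_filter, mem_Icc, Equiv.symm_apply_apply] at hy ⊢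
    exact hy.1.2
  · intro h
    have : Icc 1 a ⊆ F.image w := fun x hx => by
      rw [mem_Icc] at hx
      exact mem_image.2 ⟨w.symm x, by simp [F, hpos x hx.1, h x hx.1 hx.2, hx.2], by simp⟩
    simpa [hcard] using card_le_card this

end Rank

section Tableaux

open Finset

variable {l n : ℕ} {p : ℕ → ℕ → ℕ}

lemma exists_lt_and_le_succ (S : ℕ → ℕ) {o N : ℕ} (h0 : S 0 < o) (hN : o ≤ S N) :
    ∃ k < N, S k < o ∧ o ≤ S (k + 1) := by
  have hex : ∃ k, o ≤ S k := ⟨N, hN⟩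
  have hpos : Nat.find hex ≠ 0 := fun h => by
    have := Nat.find_spec hex
    rw [h] at this
    omega
  refine ⟨Nat.find hex - 1, ?_, ?_, ?_⟩
  · have := Nat.find_min' hex hN
    omega
  · exact not_le.1 (Nat.find_min hex (by omega))
  · rw [Nat.sub_add_cancel (Nat.one_le_iff_ne_zero.2 hpos)]
    exact Nat.find_spec hex

lemma IsMP.antitone_row (hp : IsMP l n p) (m : ℕ) {r r' : ℕ} (hr : 1 ≤ r) (h : r ≤ r') :
    p m r' ≤ p m r := by
  induction r', h using Nat.le_induction with
  | base => exact le_rfl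
  | succ r' hr' ih => exact (hp.2.1 m r' (by omega)).trans ih

lemma IsMP.inDiag_bounds (hp : IsMP l n p) {A : Node} (hA : InDiag p A) :
    1 ≤ A.2.2 ∧ A.2.2 ≤ l ∧ 1 ≤ A.1 ∧ A.1 ≤ n := by
  by_contra h
  have := hp.1 A.2.2 A.1 (by omega)
  have := hA.2
  have := hA.1
  omega

lemma IsMP.part_le (hp : IsMP l n p) (m r : ℕ) : p m r ≤ n := by
  by_cases h : m = 0 ∨ l < m ∨ r = 0 ∨ n < r
  · rw [hp.1 m r h]
    exact Nat.zero_le n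
  calc p m r ≤ compSize n p m := single_le_sum (f := p m) (fun _ _ => Nat.zero_le _)
        (mem_Icc.2 (by omega))
    _ ≤ ∑ m' ∈ Icc 1 l, compSize n p m' := single_le_sum (fun _ _ => Nat.zero_le _)
        (mem_Icc.2 (by omega))
    _ = n := hp.2.2

lemma IsMP.le_colLen_iff (hp : IsMP l n p) {m r c : ℕ} (hr : 1 ≤ r) (hc : 1 ≤ c) :
    r ≤ colLen n p m c ↔ c ≤ p m r := by
  constructor
  · intro h
    by_contra hlt
    have hsub : (Icc 1 n).filter (fun r' => c ≤ p m r') ⊆ Icc 1 (r - 1) := fun r' hr' => by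
      simp only [mem_filter, mem_Icc] at hr' ⊢
      by_contra h'
      have := hp.antitone_row m hr (show r ≤ r' by omega)
      omega
    have := card_le_card hsub
    simp only [Nat.card_Icc] at this
    rw [colLen] at h
    omega
  · intro h
    have hrn : r ≤ n := by
      by_contra h'
      have := hp.1 m r (by omega)
      omega
    have hsub : Icc 1 r ⊆ (Icc 1 n).filter (fun r' => c ≤ p m r') := fun r' hr' => by
      simp only [mem_filter, mem_Icc] at hr' ⊢
      exact ⟨⟨hr'.1, by omega⟩, h.trans (hp.antitone_row m hr'.1 hr'.2)⟩
    rw [colLen]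
    simpa using card_le_card hsub

lemma sum_colLen (n : ℕ) (p : ℕ → ℕ → ℕ) (m c : ℕ) :
    ∑ c' ∈ Icc 1 c, colLen n p m c' = ∑ r ∈ Icc 1 n, min (p m r) c := by
  simp only [colLen, card_filter]
  rw [sum_comm]
  refine sum_congr rfl fun r _ => ?_
  rw [← card_filter, show (Icc 1 c).filter (· ≤ p m r) = Icc 1 (min (p m r) c) by
    ext; simp only [mem_filter, mem_Icc, le_min_iff]; omega]
  simp

lemma sum_colLen_le_compSize (m c : ℕ) : ∑ c' ∈ Icc 1 c, colLen n p m c' ≤ compSize n p m := by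
  rw [sum_colLen]
  exact sum_le_sum fun r _ => min_le_left _ _

lemma IsMP.sum_colLen_eq_compSize (hp : IsMP l n p) (m : ℕ) :
    ∑ c' ∈ Icc 1 n, colLen n p m c' = compSize n p m := by
  rw [sum_colLen]
  exact sum_congr rfl fun r _ => min_eq_left (hp.part_le m r)

/-- The entries of component `m` of `t_p` form the interval
`(tailSize l n p (m + 1), tailSize l n p m]`. -/
def tailSize (l n : ℕ) (p : ℕ → ℕ → ℕ) (m : ℕ) : ℕ := ∑ m' ∈ Icc m l, compSize n p m'

lemma tailSize_antitone (l n : ℕ) (p : ℕ → ℕ → ℕ) : Antitone (tailSize l n p) :=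
  fun _ _ h => sum_le_sum_of_subset (Icc_subset_Icc_left h)

lemma tailSize_eq_add {m : ℕ} (hm : m ≤ l) :
    tailSize l n p m = compSize n p m + tailSize l n p (m + 1) := by
  rw [tailSize, tailSize, Icc_eq_cons_Ioc hm, sum_cons, ← Icc_add_one_left_eq_Ioc]

lemma tailSize_of_lt {m : ℕ} (hm : l < m) : tailSize l n p m = 0 := by
  rw [tailSize, Icc_eq_empty (by omega), sum_empty]

lemma IsMP.tailSize_one (hp : IsMP l n p) : tailSize l n p 1 = n := hp.2.2

lemma colTab_eq (l n : ℕ) (p : ℕ → ℕ → ℕ) (A : Node) :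
    colTab l n p A = tailSize l n p (A.2.2 + 1) +
      ∑ c' ∈ Icc 1 (A.2.1 - 1), colLen n p A.2.2 c' + A.1 := rfl

lemma IsMP.colTab_le_tailSize (hp : IsMP l n p) {A : Node} (hA : InDiag p A) :
    colTab l n p A ≤ tailSize l n p A.2.2 := by
  obtain ⟨-, hml, hr, -⟩ := hp.inDiag_bounds hA
  have hcol := (hp.le_colLen_iff hr hA.1).2 hA.2
  have hsum := sum_colLen_le_compSize (n := n) (p := p) A.2.2 A.2.1
  rw [← Nat.sub_add_cancel hA.1, sum_Icc_succ_top (by omega), Nat.sub_add_cancel hA.1] at hsum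
  rw [colTab_eq, tailSize_eq_add hml]
  omega

lemma IsMP.colTab_le_tailSize_iff (hp : IsMP l n p) {A : Node} (hA : InDiag p A) {m : ℕ} :
    colTab l n p A ≤ tailSize l n p m ↔ m ≤ A.2.2 := by
  refine ⟨fun h => ?_, fun h => (hp.colTab_le_tailSize hA).trans (tailSize_antitone l n p h)⟩
  by_contra hlt
  have := tailSize_antitone l n p (show A.2.2 + 1 ≤ m by omega)
  have := (hp.inDiag_bounds hA).2.2.1
  rw [colTab_eq] at h
  omega

lemma IsMP.comp_le_of_colTab_le (hp : IsMP l n p) {A B : Node} (hA : InDiag p A)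
    (hB : InDiag p B) (h : colTab l n p A ≤ colTab l n p B) : B.2.2 ≤ A.2.2 :=
  (hp.colTab_le_tailSize_iff hA).1 (h.trans (hp.colTab_le_tailSize hB))

lemma IsMP.exists_colTab_eq (hp : IsMP l n p) {i : ℕ} (hi : 1 ≤ i) (hin : i ≤ n) :
    ∃ B, InDiag p B ∧ colTab l n p B = i := by
  obtain ⟨k, hkl, hk₁, hk₂⟩ := exists_lt_and_le_succ (fun k => tailSize l n p (l + 1 - k))
    (o := i) (N := l) (by simp [tailSize_of_lt]; omega) (by simpa [hp.tailSize_one])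
  set m := l - k with hm
  simp only [show l + 1 - k = m + 1 by omega, show l + 1 - (k + 1) = m by omega] at hk₁ hk₂
  set o := i - tailSize l n p (m + 1) with ho
  have hsplit := tailSize_eq_add (n := n) (p := p) (show m ≤ l by omega)
  obtain ⟨c, -, hc₁, hc₂⟩ := exists_lt_and_le_succ (fun c => ∑ c' ∈ Icc 1 c, colLen n p m c')
    (o := o) (N := n) (by simp; omega) (by rw [hp.sum_colLen_eq_compSize]; omega)
  simp only [sum_Icc_succ_top (Nat.le_add_left 1 c)] at hc₁ hc₂
  set r := o - ∑ c' ∈ Icc 1 c, colLen n p m c' with hr_def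
  have hr : 1 ≤ r := by omega
  refine ⟨(r, c + 1, m), ⟨Nat.le_add_left 1 c, ?_⟩, ?_⟩
  · exact (hp.le_colLen_iff (m := m) hr (Nat.le_add_left 1 c)).1 (by omega)
  rw [colTab_eq]
  simp only [Nat.add_sub_cancel]
  omega

lemma IsPermOfTab.symm_apply {base t : Node → ℕ} {w : Equiv.Perm ℕ}
    (hw : IsPermOfTab n p base t w) {A : Node} (hA : InDiag p A) : w.symm (t A) = base A := by
  rw [Equiv.symm_apply_eq, hw.2 A hA]

end Tableaux

theorem wColDom_of_bruhat_le_general (l n : ℕ)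
    (lam mu : ℕ → ℕ → ℕ) (hlam : IsMP l n lam) (hmu : IsMP l n mu)
    (j : ℕ) (hj : j ≤ n)
    (t u : Node → ℕ) (ht : IsTab n mu t)
    (wt wu : Equiv.Perm ℕ)
    (hwt : IsPermOfTab n mu (colTab l n mu) t wt)
    (hwu : IsPermOfTab n mu (colTab l n mu) u wu)
    (hbru : BruhatLE n wu wt)
    (hdom : WColDomOn l n lam mu t j) :
    WColDomOn l n lam mu u j := by
  intro i A B hi hij hA hAi hB hBi
  have hwt_symm_le : ∀ x, 1 ≤ x → x ≤ i → wt.symm x ≤ tailSize l n mu B.2.2 := by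
    intro x hx hxi
    obtain ⟨Bx, hBx, hBxx⟩ := hlam.exists_colTab_eq hx (by omega)
    obtain ⟨Ax, hAx, hAxx⟩ := ht.2.2 x hx (by omega)
    rw [← hAxx, hwt.symm_apply hAx, hmu.colTab_le_tailSize_iff hAx]
    exact (hlam.comp_le_of_colTab_le hBx hB (by omega)).trans
      (hdom x Ax Bx hx (by omega) hAx hAxx hBx hBxx)
  have hwu_symm_le := (le_rankFn_iff (hwu.1 0 (Or.inl rfl))).1
    (((le_rankFn_iff (hwt.1 0 (Or.inl rfl))).2 hwt_symm_le).trans (rankFn_le_of_bruhatLE hbru _ _))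
    i hi le_rfl
  rwa [← hAi, hwu.symm_apply hA, hmu.colTab_le_tailSize_iff hA] at hwu_symm_le

/-- If a standard `μ`-tableau `t` is weakly `λ`-column-dominated on
`1,…,j` and `u ⊴ t` (i.e. `w_u ≤ w_t` in the Bruhat order), then so is `u`. -/
theorem wColDom_of_bruhat_le (l n : ℕ) (hl : 1 ≤ l) (hn : 1 ≤ n)
    (lam mu : ℕ → ℕ → ℕ) (hlam : IsMP l n lam) (hmu : IsMP l n mu)
    (j : ℕ) (hj : j ≤ n)
    (t u : Node → ℕ) (ht : IsTab n mu t) (hu : IsTab n mu u)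
    (htstd : IsStd mu t) (hustd : IsStd mu u)
    (wt wu : Equiv.Perm ℕ)
    (hwt : IsPermOfTab n mu (colTab l n mu) t wt)
    (hwu : IsPermOfTab n mu (colTab l n mu) u wu)
    (hbru : BruhatLE n wu wt)
    (hdom : WColDomOn l n lam mu t j) :
    WColDomOn l n lam mu u j :=
  wColDom_of_bruhat_le_general l n lam mu hlam hmu j hj t u ht wt wu hwt hwu hbru hdom

end FS
end

section
/- Let κ = (κ_1,…,κ_l) be an e-multicharge with κ_1,…,κ_l pairwise distinct, let λ, μ ∈ 𝒫^l_n, and let t ∈ Std(μ) with residue sequence i(t) = i_λ. Suppose 1 ≤ j ≤ n, t is λ-column-dominated on 1,…,j−1, and j occupies the (1,1)-position of its component in t_λ (that is, t_λ^{-1}(j) = (1,1,m) for some m). Then t is λ-column-dominated on 1,…,j. -/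
namespace FS

open scoped Classical

section Aux

variable {l n : ℕ} {lam : ℕ → ℕ → ℕ}

lemma diag_bounds (h : IsMP l n lam) {A : Node} (hA : InDiag lam A) :
    1 ≤ A.1 ∧ A.1 ≤ n ∧ 1 ≤ A.2.2 ∧ A.2.2 ≤ l := by
  have h0 : ¬ (A.2.2 = 0 ∨ l < A.2.2 ∨ A.1 = 0 ∨ n < A.1) := by
    intro hb
    have h1 := h.1 A.2.2 A.1 hb
    have h2 := hA.1; have h3 := hA.2; omega
  push_neg at h0
  omega

lemma part_mono (h : IsMP l n lam) (m : ℕ) :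
    ∀ r r', 1 ≤ r' → r' ≤ r → lam m r ≤ lam m r' := by
  intro r
  induction r with
  | zero => intro r' h1 h2; omega
  | succ k ih =>
    intro r' h1 h2
    rcases Nat.eq_or_lt_of_le h2 with he | hlt
    · rw [← he]
    · have hk : r' ≤ k := by omega
      have h1k : 1 ≤ k := le_trans h1 hk
      exact le_trans (h.2.1 m k h1k) (ih r' h1 hk)

lemma part_le_n (h : IsMP l n lam) {m r : ℕ} (hm1 : 1 ≤ m) (hm2 : m ≤ l)
    (hr1 : 1 ≤ r) (hr2 : r ≤ n) : lam m r ≤ n := by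
  calc lam m r ≤ ∑ r' ∈ Finset.Icc 1 n, lam m r' :=
        Finset.single_le_sum (fun _ _ => Nat.zero_le _) (Finset.mem_Icc.2 ⟨hr1, hr2⟩)
    _ ≤ ∑ m' ∈ Finset.Icc 1 l, ∑ r' ∈ Finset.Icc 1 n, lam m' r' :=
        Finset.single_le_sum (f := fun m' => ∑ r' ∈ Finset.Icc 1 n, lam m' r')
          (fun _ _ => Nat.zero_le _) (Finset.mem_Icc.2 ⟨hm1, hm2⟩)
    _ = n := h.2.2

lemma le_colLen (h : IsMP l n lam) {r c m : ℕ} (hd : InDiag lam (r, c, m)) :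
    r ≤ colLen n lam m c := by
  have hb := diag_bounds h hd
  have hsub : Finset.Icc 1 r ⊆ (Finset.Icc 1 n).filter fun r' => c ≤ lam m r' := by
    intro r' hr'
    rw [Finset.mem_Icc] at hr'
    rw [Finset.mem_filter, Finset.mem_Icc]
    refine ⟨⟨hr'.1, by omega⟩, le_trans hd.2 (part_mono h m r r' hr'.1 hr'.2)⟩
  calc r = (Finset.Icc 1 r).card := by simp
    _ ≤ _ := Finset.card_le_card hsub

lemma sum_colLen_le (lam : ℕ → ℕ → ℕ) (n m C : ℕ) :
    ∑ c' ∈ Finset.Icc 1 C, colLen n lam m c' ≤ compSize n lam m := by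
  unfold colLen compSize
  calc ∑ c' ∈ Finset.Icc 1 C, ((Finset.Icc 1 n).filter fun r => c' ≤ lam m r).card
      = ∑ c' ∈ Finset.Icc 1 C, ∑ r ∈ Finset.Icc 1 n, if c' ≤ lam m r then 1 else 0 := by
        exact Finset.sum_congr rfl fun c' _ => Finset.card_filter _ _
    _ = ∑ r ∈ Finset.Icc 1 n, ∑ c' ∈ Finset.Icc 1 C, if c' ≤ lam m r then 1 else 0 :=
        Finset.sum_comm
    _ ≤ ∑ r ∈ Finset.Icc 1 n, lam m r := by
        refine Finset.sum_le_sum fun r _ => ?_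
        rw [← Finset.card_filter]
        have hsub : (Finset.Icc 1 C).filter (fun c' => c' ≤ lam m r) ⊆
            Finset.Icc 1 (lam m r) := by
          intro x hx
          rw [Finset.mem_filter, Finset.mem_Icc] at hx
          rw [Finset.mem_Icc]; omega
        have := Finset.card_le_card hsub
        simpa using this

lemma inner_le_compSize (h : IsMP l n lam) {r c m : ℕ} (hd : InDiag lam (r, c, m)) :
    (∑ c' ∈ Finset.Icc 1 (c - 1), colLen n lam m c') + r ≤ compSize n lam m := by
  have hc : 1 ≤ c := hd.1
  obtain ⟨c0, rfl⟩ : ∃ c0, c = c0 + 1 := ⟨c - 1, by omega⟩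
  have h1 := le_colLen h hd
  have h2 := sum_colLen_le lam n m (c0 + 1)
  rw [Finset.sum_Icc_succ_top (by omega)] at h2
  simp only [Nat.add_sub_cancel]
  omega

lemma sum_tail_le (f : ℕ → ℕ) {a m0 le' : ℕ} (ha : a ≤ m0) (hm : m0 ≤ le') :
    f m0 + ∑ m' ∈ Finset.Icc (m0 + 1) le', f m' ≤ ∑ m' ∈ Finset.Icc a le', f m' := by
  have hni : m0 ∉ Finset.Icc (m0 + 1) le' := by simp
  have hs : insert m0 (Finset.Icc (m0 + 1) le') ⊆ Finset.Icc a le' := by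
    intro x hx
    rw [Finset.mem_insert, Finset.mem_Icc] at hx
    rw [Finset.mem_Icc]; omega
  calc f m0 + ∑ m' ∈ Finset.Icc (m0 + 1) le', f m'
      = ∑ m' ∈ insert m0 (Finset.Icc (m0 + 1) le'), f m' := (Finset.sum_insert hni).symm
    _ ≤ _ := Finset.sum_le_sum_of_subset hs

lemma colTab_ge {B : Node} (hd : InDiag lam B) (h : IsMP l n lam) :
    (∑ m' ∈ Finset.Icc (B.2.2 + 1) l, compSize n lam m') + 1 ≤ colTab l n lam B := by
  have hb := diag_bounds h hd
  unfold colTab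
  omega

lemma colTab_le {B : Node} (hd : InDiag lam B) (h : IsMP l n lam) :
    colTab l n lam B ≤ compSize n lam B.2.2 +
      ∑ m' ∈ Finset.Icc (B.2.2 + 1) l, compSize n lam m' := by
  obtain ⟨r, c, m⟩ := B
  have h1 := inner_le_compSize h hd
  unfold colTab
  simp only at h1 ⊢
  omega

lemma colTab_le_n {B : Node} (hd : InDiag lam B) (h : IsMP l n lam) :
    colTab l n lam B ≤ n := by
  have h1 := colTab_le hd h
  have hb := diag_bounds h hd
  have h2 := sum_tail_le (compSize n lam) hb.2.2.1 hb.2.2.2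
  have h3 : ∑ m' ∈ Finset.Icc 1 l, compSize n lam m' = n := h.2.2
  omega

lemma colTab_inj (h : IsMP l n lam) {B1 B2 : Node} (h1 : InDiag lam B1)
    (h2 : InDiag lam B2) (he : colTab l n lam B1 = colTab l n lam B2) : B1 = B2 := by
  have hb1 := diag_bounds h h1
  have hb2 := diag_bounds h h2
  -- components are equal
  have hcomp : ∀ (C1 C2 : Node), InDiag lam C1 → InDiag lam C2 → C1.2.2 < C2.2.2 →
      colTab l n lam C2 < colTab l n lam C1 := by
    intro C1 C2 hd1 hd2 hm
    have hg := colTab_ge hd1 h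
    have hle := colTab_le hd2 h
    have hbb1 := diag_bounds h hd1
    have hbb2 := diag_bounds h hd2
    have hs := sum_tail_le (compSize n lam) (a := C1.2.2 + 1) (by omega) hbb2.2.2.2
    omega
  have hm : B1.2.2 = B2.2.2 := by
    rcases lt_trichotomy B1.2.2 B2.2.2 with hlt | heq | hgt
    · have := hcomp B1 B2 h1 h2 hlt; omega
    · exact heq
    · have := hcomp B2 B1 h2 h1 hgt; omega
  obtain ⟨r1, c1, m1⟩ := B1
  obtain ⟨r2, c2, m2⟩ := B2
  simp only at hm
  subst hm
  -- columns are equal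
  have hcol : ∀ (ra ca rb cb : ℕ), InDiag lam (ra, ca, m1) → InDiag lam (rb, cb, m1) →
      ca < cb → colTab l n lam (ra, ca, m1) < colTab l n lam (rb, cb, m1) := by
    intro ra ca rb cb hda hdb hcc
    have hra := le_colLen h hda
    have hca : 1 ≤ ca := hda.1
    obtain ⟨ca0, rfl⟩ : ∃ x, ca = x + 1 := ⟨ca - 1, by omega⟩
    have hsplit : ∑ c' ∈ Finset.Icc 1 (ca0 + 1), colLen n lam m1 c' =
        (∑ c' ∈ Finset.Icc 1 ca0, colLen n lam m1 c') + colLen n lam m1 (ca0 + 1) :=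
      Finset.sum_Icc_succ_top (by omega) _
    have hsub : Finset.Icc 1 (ca0 + 1) ⊆ Finset.Icc 1 (cb - 1) :=
      Finset.Icc_subset_Icc le_rfl (by omega)
    have hmono := Finset.sum_le_sum_of_subset (f := colLen n lam m1) hsub
    have hrb : 1 ≤ rb := (diag_bounds h hdb).1
    unfold colTab
    simp only [Nat.add_sub_cancel]
    omega
  have hc : c1 = c2 := by
    rcases lt_trichotomy c1 c2 with hlt | heq | hgt
    · have := hcol r1 c1 r2 c2 h1 h2 hlt; omega
    · exact heq
    · have := hcol r2 c2 r1 c1 h2 h1 hgt; omega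
  subst hc
  have hr : r1 = r2 := by
    unfold colTab at he
    simp only at he
    omega
  rw [hr]

lemma colTab_surj (h : IsMP l n lam) {i : ℕ} (hi1 : 1 ≤ i) (hi2 : i ≤ n) :
    ∃ B, InDiag lam B ∧ colTab l n lam B = i := by
  classical
  set D : Finset Node :=
    (Finset.Icc 1 n ×ˢ Finset.Icc 1 n ×ˢ Finset.Icc 1 l).filter (fun A => InDiag lam A)
    with hD
  have hmemD : ∀ A : Node, A ∈ D ↔ InDiag lam A := by
    intro A
    rw [hD, Finset.mem_filter]
    constructor
    · exact fun h' => h'.2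
    · intro hA
      have hb := diag_bounds h hA
      have hc2 : A.2.1 ≤ n := le_trans hA.2 (part_le_n h hb.2.2.1 hb.2.2.2 hb.1 hb.2.1)
      refine ⟨?_, hA⟩
      rw [Finset.mem_product, Finset.mem_product]
      refine ⟨Finset.mem_Icc.2 ⟨hb.1, hb.2.1⟩, Finset.mem_Icc.2 ⟨hA.1, hc2⟩,
        Finset.mem_Icc.2 ⟨hb.2.2.1, hb.2.2.2⟩⟩
  have hcard : D.card = n := by
    rw [hD, Finset.card_filter]
    rw [Finset.sum_product]
    have hstep : ∀ r ∈ Finset.Icc 1 n,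
        (∑ p ∈ Finset.Icc 1 n ×ˢ Finset.Icc 1 l,
          (if InDiag lam (r, p) then 1 else 0)) = ∑ m ∈ Finset.Icc 1 l, lam m r := by
      intro r hr
      rw [Finset.sum_product]
      rw [Finset.sum_comm]
      refine Finset.sum_congr rfl fun m hm => ?_
      rw [Finset.mem_Icc] at hm hr
      have hle : lam m r ≤ n := part_le_n h hm.1 hm.2 hr.1 hr.2
      rw [← Finset.card_filter]
      have : (Finset.Icc 1 n).filter (fun c => InDiag lam (r, c, m)) =
          Finset.Icc 1 (lam m r) := by
        ext x
        rw [Finset.mem_filter, Finset.mem_Icc, Finset.mem_Icc]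
        unfold InDiag
        simp only
        omega
      rw [this]
      simp
    rw [Finset.sum_congr rfl hstep, Finset.sum_comm]
    exact h.2.2
  have hinj : Set.InjOn (colTab l n lam) ↑D := by
    intro a ha b hb hab
    exact colTab_inj h ((hmemD a).1 ha) ((hmemD b).1 hb) hab
  have himg : D.image (colTab l n lam) ⊆ Finset.Icc 1 n := by
    intro x hx
    rw [Finset.mem_image] at hx
    obtain ⟨B, hB, rfl⟩ := hx
    have hBd := (hmemD B).1 hB
    have hge := colTab_ge hBd h
    have hle := colTab_le_n hBd h
    rw [Finset.mem_Icc]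
    omega
  have hcardimg : (D.image (colTab l n lam)).card = n := by
    rw [Finset.card_image_of_injOn hinj, hcard]
  have heq : D.image (colTab l n lam) = Finset.Icc 1 n := by
    apply Finset.eq_of_subset_of_card_le himg
    rw [hcardimg]
    simp
  have : i ∈ D.image (colTab l n lam) := by
    rw [heq, Finset.mem_Icc]; omega
  rw [Finset.mem_image] at this
  obtain ⟨B, hB, hBe⟩ := this
  exact ⟨B, (hmemD B).1 hB, hBe⟩

end Aux

/-- Suppose the entries of the multicharge `κ` are pairwise distinct,
`t ∈ Std(μ)` has residue sequence `i(t) = i_λ`, `t` is `λ`-column-dominated on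
`1,…,j-1`, and `j` occupies the `(1,1)`-position of its component in `t_λ`.
Then `t` is `λ`-column-dominated on `1,…,j`. -/
theorem colDom_extend_at_top_left (e : ℕ) (he : e = 0 ∨ 2 ≤ e)
    (l n : ℕ) (hl : 1 ≤ l) (hn : 1 ≤ n)
    (κ : ℕ → ZMod e)
    (hdist : ∀ a b, 1 ≤ a → a ≤ l → 1 ≤ b → b ≤ l → κ a = κ b → a = b)
    (lam mu : ℕ → ℕ → ℕ) (hlam : IsMP l n lam) (hmu : IsMP l n mu)
    (t : Node → ℕ) (ht : IsTab n mu t) (hstd : IsStd mu t)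
    (hres : ∀ A B, InDiag mu A → InDiag lam B → t A = colTab l n lam B →
      resNode e κ A = resNode e κ B)
    (j : ℕ) (hj1 : 1 ≤ j) (hj2 : j ≤ n)
    (hdom : ColDomOn l n lam mu t (j - 1))
    (m : ℕ) (hmd : InDiag lam (1, 1, m)) (hpos : colTab l n lam (1, 1, m) = j) :
    ColDomOn l n lam mu t j := by
  -- j = S + 1 where S is the size of the components to the left of m
  have hjS : (∑ m' ∈ Finset.Icc (m + 1) l, compSize n lam m') + 1 = j := by
    unfold colTab at hpos
    simpa using hpos
  have hbm := diag_bounds hlam hmd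
  -- every entry < j of t lies in a component strictly left of m
  have key : ∀ A'', InDiag mu A'' → t A'' < j → m < A''.2.2 := by
    intro A'' hA'' htA''
    have h1 : 1 ≤ t A'' := (ht.1 A'' hA'').1
    have h2 : t A'' ≤ n := by omega
    obtain ⟨B'', hB'', hcB''⟩ := colTab_surj hlam h1 h2
    have hw := hdom (t A'') A'' B'' h1 (by omega) hA'' rfl hB'' hcB''
    by_contra hcon
    have hB2 : B''.2.2 ≤ m := by
      rcases hw with hw | hw
      · omega
      · omega
    have hge := colTab_ge hB'' hlam
    have hsub : Finset.Icc (m + 1) l ⊆ Finset.Icc (B''.2.2 + 1) l :=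
      Finset.Icc_subset_Icc (by omega) le_rfl
    have hmono := Finset.sum_le_sum_of_subset (f := compSize n lam) hsub
    omega
  intro i A B hi1 hij hA htA hB hcB
  rcases Nat.lt_or_ge i j with hlt | hge
  · exact hdom i A B hi1 (by omega) hA htA hB hcB
  have hieq : i = j := by omega
  subst hieq
  have hBeq : B = (1, 1, m) := colTab_inj hlam hB hmd (by rw [hcB, hpos])
  subst hBeq
  obtain ⟨r, c, m'⟩ := A
  have hbA := diag_bounds hmu hA
  have hbA1 : 1 ≤ r := hbA.1
  have hbA2 : r ≤ n := hbA.2.1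
  have hbA3 : 1 ≤ m' := hbA.2.2.1
  have hbA4 : m' ≤ l := hbA.2.2.2
  have hAc1 : 1 ≤ c := hA.1
  have hAc2 : c ≤ mu m' r := hA.2
  rcases Nat.lt_or_ge 1 r with hr | hr
  · -- node above A has a smaller entry
    obtain ⟨r0, rfl⟩ : ∃ x, r = x + 1 := ⟨r - 1, by omega⟩
    have hA'' : InDiag mu (r0, c, m') :=
      ⟨hA.1, le_trans hA.2 (part_mono hmu m' (r0 + 1) r0 (by omega) (by omega))⟩
    have hlt' : t (r0, c, m') < t (r0 + 1, c, m') := hstd.2 r0 c m' hA'' hA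
    have := key (r0, c, m') hA'' (by omega)
    exact Or.inl this
  · rcases Nat.lt_or_ge 1 c with hc | hc
    · -- node to the left of A has a smaller entry
      obtain ⟨c0, rfl⟩ : ∃ x, c = x + 1 := ⟨c - 1, by omega⟩
      have hc2 : c0 + 1 ≤ mu m' r := hAc2
      have hA'' : InDiag mu (r, c0, m') := ⟨show 1 ≤ c0 by omega, show c0 ≤ mu m' r by omega⟩
      have hlt' : t (r, c0, m') < t (r, c0 + 1, m') := hstd.1 r c0 m' hA'' hA
      have := key (r, c0, m') hA'' (by have ht' : t (r, c0 + 1, m') = i := htA; omega)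
      exact Or.inl this
    · -- A = (1, 1, m'); use residues and distinctness of the multicharge
      have hr1 : r = 1 := by omega
      have hc1 : c = 1 := by omega
      subst hr1; subst hc1
      have hresAB := hres (1, 1, m') (1, 1, m) hA hmd (htA.trans hpos.symm)
      unfold resNode at hresAB
      simp only [Nat.cast_one] at hresAB
      have hκ : κ m' = κ m := by
        have := hresAB
        abel_nf at this
        simpa using this
      have hmm : m' = m := hdist m' m hbA.2.2.1 hbA.2.2.2 hbm.2.2.1 hbm.2.2.2 hκ
      exact Or.inr ⟨hmm, le_rfl⟩

end FS
end
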